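/- arXiv:1201.0155 — 3 statements merged into one kernel-verified Lean document; each statement's English description precedes it below -/
import Mathlib

section
/- Let p > q ≥ 0, let A₁,…,A_p be d×d complex matrices and B₀,…,B_q be d×m complex matrices, and set P(z) = z^p I_d + A₁z^{p−1} + … + A_p and Q(z) = B₀z^q + B₁z^{q−1} + … + B_q. Define β₁ = … = β_{p−q−1} = 0 and, for j = 0,1,…,q, β_{p−j} = −Σ_{i=1}^{p−j−1} A_i β_{p−j−i} + B_{q−j}; let β be the (pd)×m matrix obtained by stacking β₁,…,β_p, let 𝒜 be the (pd)×(pd) block companion matrix with top-right block I_{d(p−1)} and bottom block row (−A_p, …, −A₁), and let E = (I_d, 0, …, 0) be the d×(pd) matrix selecting the first d coordinates. Then for every z ∈ ℂ with det P(z) ≠ 0 the matrix zI_{pd} − 𝒜 is invertible and E (zI_{pd} − 𝒜)^{−1} β = P(z)^{−1} Q(z). -/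
/-!
Let `T_k(z) = z^k + A₁ z^{k-1} + ⋯ + A_k` be the partial Horner sums of `P`, so that
`T_0 = 1`, `T_{k+1} = z T_k + A_{k+1}` and `T_p = P(z)`. Horner's recursion says precisely that the
block row `W = P(z)⁻¹ (T_{p-1}, …, T_1, T_0)` satisfies `W (zI - 𝒜) = E`. If `(zI - 𝒜) v = 0`,
then `E v = 0`, and the shift rows of `zI - 𝒜` give `v_{k+1} = z v_k`, so `v = 0`; hence
`zI - 𝒜` is invertible and `E (zI - 𝒜)⁻¹ β = W β = P(z)⁻¹ ∑_j T_{p-j} β_j`. Expanding, the last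
sum is `∑_k z^{p-k} (β_k + ∑_{i+j=k} A_i β_j)`, which the recursion defining `β` turns into `Q(z)`.
-/

open Matrix

noncomputable section

/-- The autoregressive matrix polynomial
`P(z) = z^p I_d + z^{p-1} A₁ + ... + A_p`, where `A j` denotes `A_{j+1}`. -/
def arPoly (p d : ℕ) (A : Fin p → Matrix (Fin d) (Fin d) ℂ) (z : ℂ) :
    Matrix (Fin d) (Fin d) ℂ :=
  z ^ p • (1 : Matrix (Fin d) (Fin d) ℂ) + ∑ j : Fin p, z ^ (p - 1 - (j : ℕ)) • A j

/-- The moving average matrix polynomial `Q(z) = B₀ z^q + B₁ z^{q-1} + ... + B_q`,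
where `B j` denotes `B_j`. -/
def maPoly (q d m : ℕ) (B : Fin (q + 1) → Matrix (Fin d) (Fin m) ℂ) (z : ℂ) :
    Matrix (Fin d) (Fin m) ℂ :=
  ∑ j : Fin (q + 1), z ^ (q - (j : ℕ)) • B j

/-- The `(pd) × (pd)` block companion matrix with top-right block `I_{d(p-1)}` and bottom
block row `(-A_p, ..., -A₁)`, indexed by `Fin p × Fin d`. -/
def companionMatrix (p d : ℕ) (A : Fin p → Matrix (Fin d) (Fin d) ℂ) :
    Matrix (Fin p × Fin d) (Fin p × Fin d) ℂ :=
  fun ik jl =>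
    if (ik.1 : ℕ) + 1 = p then -A jl.1.rev ik.2 jl.2
    else if (jl.1 : ℕ) = (ik.1 : ℕ) + 1 ∧ jl.2 = ik.2 then 1 else 0

namespace Matrix

section Blocks

variable {ι m n l R : Type*}

def blockRow (w : ι → Matrix m n R) : Matrix m (ι × n) R :=
  of fun i jk => w jk.1 i jk.2

def blockCol (x : ι → Matrix n l R) : Matrix (ι × n) l R :=
  of fun ik j => x ik.1 ik.2 j

theorem blockRow_mul_blockCol [Fintype ι] [Fintype n] [NonUnitalNonAssocSemiring R]
    (w : ι → Matrix m n R) (x : ι → Matrix n l R) :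
    blockRow w * blockCol x = ∑ j, w j * x j := by
  ext i k
  simp [blockRow, blockCol, mul_apply, sum_apply, Fintype.sum_prod_type]

theorem smul_blockRow {S : Type*} [SMul S R] (c : S) (w : ι → Matrix m n R) :
    c • blockRow w = blockRow (c • w) :=
  rfl

theorem blockRow_sub [Sub R] (w v : ι → Matrix m n R) :
    blockRow w - blockRow v = blockRow (w - v) :=
  rfl

theorem blockRow_mulVec [Fintype ι] [Fintype n] [NonUnitalNonAssocSemiring R]
    (w : ι → Matrix m n R) (v : ι × n → R) :
    blockRow w *ᵥ v = ∑ j, w j *ᵥ Function.curry v j := by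
  ext i
  simp [blockRow, mulVec, dotProduct, Fintype.sum_prod_type, Finset.sum_apply]

theorem blockRow_single_one_mulVec [Fintype ι] [DecidableEq ι] [Fintype n] [DecidableEq n]
    [NonAssocSemiring R] (j : ι) (v : ι × n → R) :
    blockRow (Pi.single j 1 : ι → Matrix n n R) *ᵥ v = Function.curry v j := by
  rw [blockRow_mulVec, Fintype.sum_eq_single j fun i hi => by simp [hi], Pi.single_eq_same,
    one_mulVec]

end Blocks

end Matrix

section Companion

variable {n d m : ℕ} (A : Fin (n + 1) → Matrix (Fin d) (Fin d) ℂ)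

theorem companionMatrix_castSucc_apply (k : Fin n) (i : Fin d) (jl : Fin (n + 1) × Fin d) :
    companionMatrix (n + 1) d A (k.castSucc, i) jl = if jl = (k.succ, i) then 1 else 0 := by
  have hk : (k : ℕ) ≠ n := k.isLt.ne
  simp [companionMatrix, hk, Prod.ext_iff, Fin.ext_iff]

theorem companionMatrix_last_apply (i : Fin d) (j : Fin (n + 1)) (l : Fin d) :
    companionMatrix (n + 1) d A (Fin.last n, i) (j, l) = -A j.rev i l := by
  simp [companionMatrix]

theorem companionMatrix_mulVec_castSucc (v : Fin (n + 1) × Fin d → ℂ) (k : Fin n) (i : Fin d) :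
    (companionMatrix (n + 1) d A *ᵥ v) (k.castSucc, i) = v (k.succ, i) := by
  simp [mulVec, dotProduct, companionMatrix_castSucc_apply]

theorem blockRow_mul_companionMatrix (w : Fin (n + 1) → Matrix (Fin m) (Fin d) ℂ) :
    blockRow w * companionMatrix (n + 1) d A =
      blockRow fun j => Fin.cons (0 : Matrix (Fin m) (Fin d) ℂ) (fun k => w k.castSucc) j -
        w (Fin.last n) * A j.rev := by
  ext i ⟨j, l⟩
  rw [mul_apply, Fintype.sum_prod_type, Fin.sum_univ_castSucc]
  simp only [companionMatrix_castSucc_apply, companionMatrix_last_apply]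
  cases j using Fin.cases <;>
    simp [blockRow, mul_apply, Prod.ext_iff, (Fin.succ_ne_zero _).symm, ite_and, sub_eq_add_neg]

end Companion

section Horner

variable {R ι : Type*} [CommSemiring R] [DecidableEq ι] {p : ℕ}

def hornerPartial (z : R) (A : Fin p → Matrix ι ι R) (k : ℕ) : Matrix ι ι R :=
  z ^ k • 1 + ∑ j : Fin p, if (j : ℕ) < k then z ^ (k - 1 - j) • A j else 0

theorem hornerPartial_zero (z : R) (A : Fin p → Matrix ι ι R) : hornerPartial z A 0 = 1 := by
  simp [hornerPartial]

theorem hornerPartial_succ (z : R) (A : Fin p → Matrix ι ι R) (j : Fin p) :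
    hornerPartial z A (j + 1) = z • hornerPartial z A j + A j := by
  have hterm : ∀ i : Fin p,
      (if (i : ℕ) < j + 1 then z ^ ((j : ℕ) + 1 - 1 - i) • A i else 0) =
        z • (if (i : ℕ) < j then z ^ ((j : ℕ) - 1 - i) • A i else 0) +
          if i = j then A i else 0 := by
    intro i
    rcases lt_trichotomy i j with h | rfl | h
    · have h' : (i : ℕ) < j := h
      rw [if_pos (by omega), if_pos h', if_neg h.ne, smul_smul, ← pow_succ', add_zero]
      congr 2
      omega
    · simp
    · have h' : (j : ℕ) < i := h
      rw [if_neg (by omega), if_neg (by omega), if_neg h.ne', smul_zero, add_zero]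
  simp only [hornerPartial, hterm, Finset.sum_add_distrib, Finset.sum_ite_eq', Finset.mem_univ,
    if_true, smul_add, Finset.smul_sum, smul_smul, ← pow_succ']
  abel

theorem hornerPartial_eq_arPoly {d : ℕ} (A : Fin p → Matrix (Fin d) (Fin d) ℂ) (z : ℂ) :
    hornerPartial z A p = arPoly p d A z := by
  simp [hornerPartial, arPoly]

end Horner

theorem Fin.sum_ite_eq_val {M : Type*} [AddCommMonoid M] {p : ℕ} (c : ℕ) (f : ℕ → M) :
    ∑ k : Fin p, (if c = (k : ℕ) then f k else 0) = if c < p then f c else 0 := by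
  rw [Fin.sum_univ_eq_sum_range (fun k => if c = k then f k else 0)]
  simp [Finset.sum_ite_eq]

section Convolution

variable {R ι κ : Type*} [CommSemiring R] [Fintype ι] {p : ℕ}

def arConvolution (A : Fin p → Matrix ι ι R) (β : Fin p → Matrix ι κ R) (k : Fin p) :
    Matrix ι κ R :=
  β k + ∑ i : Fin p, ∑ j : Fin p, if (i : ℕ) + (j : ℕ) + 1 = (k : ℕ) then A i * β j else 0

theorem arConvolution_eq_zero (A : Fin p → Matrix ι ι R) (β : Fin p → Matrix ι κ R) (k : Fin p)
    (hβ : ∀ j : Fin p, j ≤ k → β j = 0) : arConvolution A β k = 0 := by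
  rw [arConvolution, hβ k le_rfl, zero_add]
  refine Finset.sum_eq_zero fun i _ => Finset.sum_eq_zero fun j _ => ?_
  split_ifs with h
  · rw [hβ j (Fin.le_iff_val_le_val.2 (by omega)), Matrix.mul_zero]
  · rfl

theorem sum_hornerPartial_rev_mul [DecidableEq ι] (z : R) (A : Fin p → Matrix ι ι R)
    (β : Fin p → Matrix ι κ R) :
    ∑ j : Fin p, hornerPartial z A j.rev * β j =
      ∑ k : Fin p, z ^ (p - 1 - k) • arConvolution A β k := by
  have hterm : ∀ j : Fin p, hornerPartial z A j.rev * β j = z ^ (p - 1 - j) • β j +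
      ∑ i : Fin p,
        if (i : ℕ) + j + 1 < p then z ^ (p - 1 - (i + j + 1)) • (A i * β j) else 0 := by
    intro j
    simp only [hornerPartial, Matrix.add_mul, Matrix.smul_mul, Matrix.one_mul, Matrix.sum_mul,
      Fin.val_rev]
    congr 1
    · rw [Nat.sub_sub, add_comm 1]
    · refine Finset.sum_congr rfl fun i _ => ?_
      split_ifs with h h' h'
      · rw [Matrix.smul_mul]
        congr 2
        omega
      · omega
      · omega
      · exact Matrix.zero_mul _
  simp only [hterm, arConvolution, smul_add, Finset.smul_sum, smul_ite, smul_zero,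
    Finset.sum_add_distrib]
  congr 1
  rw [Finset.sum_comm]
  symm
  rw [Finset.sum_comm]
  refine Finset.sum_congr rfl fun i _ => ?_
  rw [Finset.sum_comm]
  exact Finset.sum_congr rfl fun j _ =>
    Fin.sum_ite_eq_val _ fun k => z ^ (p - 1 - k) • (A i * β j)

end Convolution

theorem sum_pow_smul_arConvolution_eq_maPoly {p q d m : ℕ} (hpq : q < p)
    (A : Fin p → Matrix (Fin d) (Fin d) ℂ) (B : Fin (q + 1) → Matrix (Fin d) (Fin m) ℂ)
    (β : Fin p → Matrix (Fin d) (Fin m) ℂ) (hβ0 : ∀ k : Fin p, (k : ℕ) + q + 1 < p → β k = 0)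
    (hβ : ∀ k : Fin p, p ≤ (k : ℕ) + q + 1 →
      arConvolution A β k = B ⟨(k : ℕ) + q + 1 - p, by omega⟩) (z : ℂ) :
    ∑ k : Fin p, z ^ (p - 1 - k) • arConvolution A β k = maPoly q d m B z := by
  obtain ⟨r, rfl⟩ : ∃ r, p = r + (q + 1) := ⟨p - (q + 1), by omega⟩
  have hlow : ∀ i : Fin r, arConvolution A β (Fin.castAdd (q + 1) i) = 0 := fun i =>
    arConvolution_eq_zero A β _ fun j hj => hβ0 j <| by
      have := Fin.le_iff_val_le_val.1 hj
      rw [Fin.val_castAdd] at this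
      omega
  have hhigh : ∀ j : Fin (q + 1), arConvolution A β (Fin.natAdd r j) = B j := by
    intro j
    rw [hβ _ (by rw [Fin.val_natAdd]; omega)]
    exact congrArg B (Fin.ext (by simp only [Fin.val_natAdd]; omega))
  rw [Fin.sum_univ_add, maPoly]
  simp only [hlow, hhigh, smul_zero, Finset.sum_const_zero, zero_add]
  refine Finset.sum_congr rfl fun j _ => ?_
  rw [Fin.val_natAdd, show r + (q + 1) - 1 - (r + j) = q - j by omega]

section Transfer

variable {n d : ℕ} (A : Fin (n + 1) → Matrix (Fin d) (Fin d) ℂ) {z : ℂ}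

theorem blockRow_hornerPartial_mul_sub_companionMatrix (hP : IsUnit (arPoly (n + 1) d A z).det) :
    blockRow (fun j : Fin (n + 1) => (arPoly (n + 1) d A z)⁻¹ * hornerPartial z A j.rev) *
        (z • 1 - companionMatrix (n + 1) d A) =
      blockRow (Pi.single 0 1) := by
  rw [Matrix.mul_sub, Matrix.mul_smul, Matrix.mul_one, blockRow_mul_companionMatrix,
    smul_blockRow, blockRow_sub]
  congr 1
  funext j
  cases j using Fin.cases with
  | zero =>
    have hrec := hornerPartial_succ z A (Fin.last n)
    rw [Fin.val_last, hornerPartial_eq_arPoly] at hrec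
    simp only [Pi.sub_apply, Pi.smul_apply, Fin.cons_zero, Fin.rev_zero, Fin.rev_last,
      Fin.val_last, Fin.val_zero, hornerPartial_zero, Matrix.mul_one, zero_sub, sub_neg_eq_add,
      Pi.single_eq_same]
    rw [← Matrix.mul_smul, ← Matrix.mul_add, ← hrec, Matrix.nonsing_inv_mul _ hP]
  | succ k =>
    have hrec := hornerPartial_succ z A k.rev.castSucc
    rw [Fin.val_castSucc] at hrec
    simp only [Pi.sub_apply, Pi.smul_apply, Fin.cons_succ, Fin.rev_succ, Fin.rev_castSucc,
      Fin.rev_last, Fin.val_succ, Fin.val_castSucc, Fin.val_zero, hornerPartial_zero, hrec,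
      Matrix.mul_one, Pi.single_eq_of_ne (Fin.succ_ne_zero k)]
    rw [Matrix.mul_add, Matrix.mul_smul]
    abel

theorem isUnit_sub_companionMatrix_of_blockRow_mul {W : Matrix (Fin d) (Fin (n + 1) × Fin d) ℂ}
    (hW : W * (z • 1 - companionMatrix (n + 1) d A) = blockRow (Pi.single 0 1)) :
    IsUnit (z • 1 - companionMatrix (n + 1) d A) := by
  rw [← Matrix.mulVec_injective_iff_isUnit]
  suffices hker : ∀ u, (z • 1 - companionMatrix (n + 1) d A) *ᵥ u = 0 → u = 0 by
    intro v v' h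
    exact sub_eq_zero.1 (hker _ (by rw [Matrix.mulVec_sub, h, sub_self]))
  intro u hu
  have hfirst : ∀ i, u (0, i) = 0 := by
    have := congrArg (W *ᵥ ·) hu
    simp only [Matrix.mulVec_mulVec, hW, blockRow_single_one_mulVec, Matrix.mulVec_zero] at this
    exact fun i => congrFun this i
  have hshift : ∀ (k : Fin n) i, u (k.succ, i) = z * u (k.castSucc, i) := by
    intro k i
    have := congrFun hu (k.castSucc, i)
    rw [Matrix.sub_mulVec, Pi.sub_apply, companionMatrix_mulVec_castSucc, Matrix.smul_mulVec,
      Matrix.one_mulVec, Pi.smul_apply, smul_eq_mul, Pi.zero_apply, sub_eq_zero] at this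
    exact this.symm
  funext ⟨j, i⟩
  show u (j, i) = 0
  induction j using Fin.induction with
  | zero => exact hfirst i
  | succ k ih => rw [hshift, ih, mul_zero]

end Transfer

/-- Transfer function identity for the state space representation of a
CARMA(p,q) process: with `β₁ = ... = β_{p-q-1} = 0` and
`β_{p-j} = -∑_{i=1}^{p-j-1} A_i β_{p-j-i} + B_{q-j}` for `j = 0, ..., q` (the recursion is
encoded as `β_{k+1} + ∑_{i+j=k+1, i,j ≥ 1} A_i β_j = B_{q-p+1+k}`, where `β k` denotes
`β_{k+1}`, `A i` denotes `A_{i+1}` and `B j` denotes `B_j`), for every `z` with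
`det P(z) ≠ 0` the matrix `z I_{pd} - 𝒜` is invertible and
`E (z I_{pd} - 𝒜)⁻¹ β = P(z)⁻¹ Q(z)`, where `E = (I_d, 0, ..., 0)`. -/
theorem companion_transfer_function (p q d m : ℕ) (hpq : q < p)
    (A : Fin p → Matrix (Fin d) (Fin d) ℂ) (B : Fin (q + 1) → Matrix (Fin d) (Fin m) ℂ)
    (β : Fin p → Matrix (Fin d) (Fin m) ℂ)
    (hβ0 : ∀ k : Fin p, (k : ℕ) + q + 1 < p → β k = 0)
    (hβ : ∀ k : Fin p, p ≤ (k : ℕ) + q + 1 →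
      β k + ∑ i : Fin p, ∑ j : Fin p,
          (if (i : ℕ) + (j : ℕ) + 1 = (k : ℕ) then A i * β j else 0) =
        B ⟨(k : ℕ) + q + 1 - p, by have := k.isLt; omega⟩)
    (Emat : Matrix (Fin d) (Fin p × Fin d) ℂ)
    (hE : Emat = fun k jl => if (jl.1 : ℕ) = 0 ∧ jl.2 = k then 1 else 0)
    (βmat : Matrix (Fin p × Fin d) (Fin m) ℂ)
    (hβmat : βmat = fun ik l => β ik.1 ik.2 l) :
    ∀ z : ℂ, (arPoly p d A z).det ≠ 0 →
      IsUnit (z • (1 : Matrix (Fin p × Fin d) (Fin p × Fin d) ℂ) - companionMatrix p d A) ∧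
      Emat * (z • (1 : Matrix (Fin p × Fin d) (Fin p × Fin d) ℂ) - companionMatrix p d A)⁻¹ *
          βmat =
        (arPoly p d A z)⁻¹ * maPoly q d m B z := by
  intro z hz
  obtain ⟨n, rfl⟩ : ∃ n, p = n + 1 := ⟨p - 1, by omega⟩
  subst hE hβmat
  have hWM := blockRow_hornerPartial_mul_sub_companionMatrix A (isUnit_iff_ne_zero.2 hz)
  have hM := isUnit_sub_companionMatrix_of_blockRow_mul A hWM
  have hE : (fun k jl => if (jl.1 : ℕ) = 0 ∧ jl.2 = k then 1 else 0 :
      Matrix (Fin d) (Fin (n + 1) × Fin d) ℂ) = blockRow (Pi.single 0 1) := by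
    ext k ⟨j, l⟩
    cases j using Fin.cases <;> simp [blockRow, one_apply, eq_comm]
  refine ⟨hM, ?_⟩
  rw [hE, ← hWM, mul_nonsing_inv_cancel_right _ _ ((isUnit_iff_isUnit_det _).1 hM)]
  rw [show (fun ik l => β ik.1 ik.2 l : Matrix (Fin (n + 1) × Fin d) (Fin m) ℂ) = blockCol β
    from rfl, blockRow_mul_blockCol]
  simp only [Matrix.mul_assoc, ← Matrix.mul_sum]
  rw [sum_hornerPartial_rev_mul, sum_pow_smul_arConvolution_eq_maPoly hpq A B β hβ0 hβ]
end
end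

section
/- Let ν be a measure on ℝ^m with ν({0}) = 0, ∫_{ℝ^m} min(‖x‖², 1) ν(dx) < ∞, and ∫_{‖x‖≥1} ln‖x‖ ν(dx) < ∞. Let A be an n×n real matrix all of whose (complex) eigenvalues have negative real part, and let β be an n×m real matrix. Then ∫₀^∞ ∫_{ℝ^m} min(‖exp(sA) β x‖², 1) ν(dx) ds < ∞. Consequently, the measure ν_G^∞ on ℝ^n defined by ν_G^∞(B) = ∫₀^∞ ∫_{ℝ^m} 1_B(exp(sA)βx) ν(dx) ds for Borel sets B with 0 ∉ B satisfies ∫ min(‖y‖²,1) ν_G^∞(dy) < ∞. -/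
open MeasureTheory Matrix

noncomputable section

/-!
If every eigenvalue of `A` has real part `< -δ`, then on the generalized eigenspace of an
eigenvalue `μ` the exponential series of the nilpotent part `A - μ` is a finite sum, so
`exp(sA) v = e^{sμ} · poly(s)` is `O(e^{-δs})`; as these spaces span, `‖exp(sA)βx‖ ≤ C e^{-δs}‖x‖`.
For `r = C‖x‖`, splitting `∫₀^∞ min(r² e^{-2δs}, 1) ds` at `s₀ = log⁺ r / δ` bounds it by
`min(r², 1)/(2δ) + log⁺ r / δ ≤ K min(‖x‖², 1) + log⁺‖x‖ / δ` for a constant `K`, whose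
`ν`-integral is finite by the two moment conditions. Tonelli applies since `ν` is σ-finite: it is
finite on `{‖x‖ ≥ ε}` and null on `{0}`. Finally `ν_G` agrees away from `0` with the image of
`ds ⊗ ν` under `(s, x) ↦ exp(sA)βx`, and `min(‖y‖², 1)` vanishes at `0`, so its `ν_G`-integral
is the double integral just bounded.
-/

open Filter Set Asymptotics Topology Real
open scoped ENNReal

theorem Complex.norm_ofReal_comp {ι : Type*} [Fintype ι] (w : ι → ℝ) :
    ‖Complex.ofReal ∘ w‖ = ‖w‖ := by
  refine le_antisymm ((pi_norm_le_iff_of_nonneg (norm_nonneg _)).2 fun i => ?_)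
    ((pi_norm_le_iff_of_nonneg (norm_nonneg _)).2 fun i => ?_)
  · simpa using norm_le_pi_norm w i
  · simpa using norm_le_pi_norm (Complex.ofReal ∘ w) i

section MatrixExp

variable {ι : Type*} [Fintype ι] [DecidableEq ι]

open scoped Norms.Operator in
theorem Matrix.exp_smul_mulVec_eq_sum {𝕜 : Type*} [RCLike 𝕜] (N : Matrix ι ι 𝕜) {v : ι → 𝕜}
    {k : ℕ} (hk : N ^ k *ᵥ v = 0) (t : 𝕜) :
    NormedSpace.exp (t • N) *ᵥ v = ∑ j ∈ Finset.range k, (t ^ j / j.factorial) • (N ^ j *ᵥ v) := by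
  have hsum := (NormedSpace.exp_series_hasSum_exp' (𝕂 := 𝕜) (t • N)).map
    (mulVec.addMonoidHomLeft v) (continuous_id.matrix_mulVec continuous_const)
  have hterm (j : ℕ) : mulVec.addMonoidHomLeft v ((j.factorial⁻¹ : 𝕜) • (t • N) ^ j)
      = (t ^ j / j.factorial) • (N ^ j *ᵥ v) := by
    simp only [mulVec.addMonoidHomLeft, AddMonoidHom.coe_mk, ZeroHom.coe_mk, smul_pow,
      smul_smul, smul_mulVec, div_eq_inv_mul]
  simp only [Function.comp_def, hterm] at hsum
  refine hsum.unique (hasSum_sum_of_ne_finset_zero fun j hj => ?_)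
  obtain ⟨i, rfl⟩ := Nat.exists_eq_add_of_le' (not_lt.mp (Finset.mem_range.not.mp hj))
  rw [pow_add N, ← mulVec_mulVec, hk, mulVec_zero, smul_zero]

theorem Matrix.norm_exp_smul_mulVec_le {𝕜 : Type*} [RCLike 𝕜] (N : Matrix ι ι 𝕜) {v : ι → 𝕜}
    {k : ℕ} (hk : N ^ k *ᵥ v = 0) {ε s : ℝ} (hε : 0 < ε) (hs : 0 ≤ s) :
    ‖NormedSpace.exp ((s : 𝕜) • N) *ᵥ v‖
      ≤ exp (ε * s) * ∑ j ∈ Finset.range k, ‖N ^ j *ᵥ v‖ / ε ^ j := by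
  rw [N.exp_smul_mulVec_eq_sum hk, Finset.mul_sum]
  refine (norm_sum_le _ _).trans (Finset.sum_le_sum fun j _ => ?_)
  have hcoeff : s ^ j / j.factorial ≤ exp (ε * s) / ε ^ j := by
    rw [le_div_iff₀ (by positivity), div_mul_eq_mul_div, ← mul_pow, mul_comm s]
    exact pow_div_factorial_le_exp (x := ε * s) (by positivity) j
  calc ‖((s : 𝕜) ^ j / j.factorial) • (N ^ j *ᵥ v)‖
      = s ^ j / j.factorial * ‖N ^ j *ᵥ v‖ := by
        rw [norm_smul, norm_div, norm_pow, RCLike.norm_natCast, RCLike.norm_ofReal,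
          abs_of_nonneg hs]
    _ ≤ exp (ε * s) / ε ^ j * ‖N ^ j *ᵥ v‖ := by gcongr
    _ = exp (ε * s) * (‖N ^ j *ᵥ v‖ / ε ^ j) := by ring

open scoped Norms.Operator in
theorem Matrix.exp_smul_eq_exp_smul_sub (M : Matrix ι ι ℂ) (μ t : ℂ) :
    NormedSpace.exp (t • M) = Complex.exp (t * μ) • NormedSpace.exp (t • (M - μ • 1)) := by
  have hcomm : Commute ((t * μ) • (1 : Matrix ι ι ℂ)) (t • (M - μ • 1)) :=
    ((Commute.one_left _).smul_left _).smul_right _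
  have hsplit : t • M = (t * μ) • (1 : Matrix ι ι ℂ) + t • (M - μ • 1) := by
    rw [smul_sub, smul_smul]
    abel
  have hscalar : NormedSpace.exp (algebraMap ℂ (Matrix ι ι ℂ) (t * μ))
      = algebraMap ℂ (Matrix ι ι ℂ) (NormedSpace.exp (t * μ)) :=
    (NormedSpace.algebraMap_exp_comm _).symm
  rw [hsplit, exp_add_of_commute _ _ hcomm, ← Algebra.algebraMap_eq_smul_one, hscalar,
    Algebra.algebraMap_eq_smul_one, smul_one_mul, Complex.exp_eq_exp_ℂ]

theorem Matrix.isBigO_exp_smul_mulVec_of_pow_mulVec_eq_zero (M : Matrix ι ι ℂ) {μ : ℂ} {δ : ℝ}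
    (hμ : μ.re < -δ) {v : ι → ℂ} {k : ℕ} (hk : (M - μ • 1) ^ k *ᵥ v = 0) :
    (fun s : ℝ => NormedSpace.exp ((s : ℂ) • M) *ᵥ v) =O[𝓟 (Ici 0)] fun s => exp (-(δ * s)) := by
  set ε := -δ - μ.re with hε
  refine isBigO_principal.2
    ⟨∑ j ∈ Finset.range k, ‖(M - μ • 1) ^ j *ᵥ v‖ / ε ^ j, fun s hs => ?_⟩
  rw [M.exp_smul_eq_exp_smul_sub μ, smul_mulVec, norm_smul, Complex.norm_exp,
    Real.norm_of_nonneg (exp_nonneg _), Complex.re_ofReal_mul]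
  calc exp (s * μ.re) * ‖NormedSpace.exp ((s : ℂ) • (M - μ • 1)) *ᵥ v‖
      ≤ exp (s * μ.re) *
          (exp (ε * s) * ∑ j ∈ Finset.range k, ‖(M - μ • 1) ^ j *ᵥ v‖ / ε ^ j) := by
        gcongr
        exact (M - μ • 1).norm_exp_smul_mulVec_le hk (by linarith) hs
    _ = _ := by
        rw [← mul_assoc, ← exp_add, mul_comm, hε]
        congr 2
        ring

def Matrix.expDecaySubmodule (M : Matrix ι ι ℂ) (δ : ℝ) : Submodule ℂ (ι → ℂ) where
  carrier := {v | (fun s : ℝ => NormedSpace.exp ((s : ℂ) • M) *ᵥ v) =O[𝓟 (Ici 0)]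
    fun s => exp (-(δ * s))}
  add_mem' hv hw := by simpa only [mem_ofPred_eq, mulVec_add] using hv.add hw
  zero_mem' := by simpa only [mem_ofPred_eq, mulVec_zero] using isBigO_zero _ _
  smul_mem' c v hv := by
    simp only [mem_ofPred_eq, mulVec_smul]
    exact hv.const_smul_left c

theorem Matrix.expDecaySubmodule_eq_top (M : Matrix ι ι ℂ) {δ : ℝ}
    (hM : ∀ μ ∈ spectrum ℂ M, μ.re < -δ) : M.expDecaySubmodule δ = ⊤ := by
  set f : Module.End ℂ (ι → ℂ) := toLinAlgEquiv' M
  rw [eq_top_iff, ← Module.End.iSup_maxGenEigenspace_eq_top f]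
  refine iSup_le fun μ => ?_
  rcases eq_or_ne (f.maxGenEigenspace μ) ⊥ with hbot | hbot
  · simp [hbot]
  have hμ : μ ∈ spectrum ℂ M := by
    rw [← AlgEquiv.spectrum_eq (toLinAlgEquiv' (R := ℂ) (n := ι)) M]
    exact (Module.End.HasUnifEigenvalue.lt (k := ⊤) zero_lt_one hbot).mem_spectrum
  intro v hv
  obtain ⟨k, hk⟩ := (Module.End.mem_maxGenEigenspace f μ v).mp hv
  refine M.isBigO_exp_smul_mulVec_of_pow_mulVec_eq_zero (hM μ hμ) (k := k) ?_
  rwa [← toLinAlgEquiv'_apply, map_pow, map_sub, map_smul, map_one]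

theorem Matrix.exists_norm_mulVec_le_of_isBigO {α κ 𝕜 : Type*} [Fintype κ] [NormedField 𝕜]
    {l : Filter α} {E : α → Matrix κ ι 𝕜} {g : α → ℝ} (h : ∀ v, (fun a => E a *ᵥ v) =O[l] g) :
    ∃ C, 0 ≤ C ∧ ∀ᶠ a in l, ∀ v, ‖E a *ᵥ v‖ ≤ C * ‖g a‖ * ‖v‖ := by
  choose c hc₀ hc using fun i => (h (Pi.single i 1)).exists_nonneg
  refine ⟨∑ i, c i, Finset.sum_nonneg fun i _ => hc₀ i, ?_⟩
  filter_upwards [eventually_all.2 fun i => (hc i).bound] with a ha v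
  calc ‖E a *ᵥ v‖ = ‖∑ i, v i • E a *ᵥ Pi.single i 1‖ := by
        conv_lhs => rw [← Finset.univ_sum_single v]
        simp [mulVec_sum]
    _ ≤ ∑ i, ‖v‖ * (c i * ‖g a‖) := by
        refine norm_sum_le_of_le _ fun i _ => ?_
        rw [norm_smul]
        exact mul_le_mul (norm_le_pi_norm v i) (ha i) (norm_nonneg _) (norm_nonneg _)
    _ = (∑ i, c i) * ‖g a‖ * ‖v‖ := by
        rw [← Finset.mul_sum, ← Finset.sum_mul]
        ring

open scoped Norms.Operator in
theorem Matrix.exp_map_ofReal (A : Matrix ι ι ℝ) :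
    NormedSpace.exp (A.map Complex.ofReal) = (NormedSpace.exp A).map Complex.ofReal :=
  (NormedSpace.map_exp (Complex.ofRealHom.mapMatrix : Matrix ι ι ℝ →+* Matrix ι ι ℂ)
    (by exact continuous_id.matrix_map Complex.continuous_ofReal) A).symm

theorem Matrix.exists_norm_exp_smul_mulVec_le (A : Matrix ι ι ℝ)
    (hA : ∀ μ ∈ spectrum ℂ (A.map Complex.ofReal), μ.re < 0) :
    ∃ δ > 0, ∃ C, 0 ≤ C ∧ ∀ s : ℝ, 0 ≤ s → ∀ v,
      ‖NormedSpace.exp (s • A) *ᵥ v‖ ≤ C * exp (-(δ * s)) * ‖v‖ := by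
  set A' := A.map Complex.ofReal
  have hgap : ∀ᶠ δ in 𝓝 (0 : ℝ), ∀ μ ∈ spectrum ℂ A', μ.re < -δ :=
    A'.finite_spectrum.eventually_all.2 fun μ hμ =>
      continuous_neg.tendsto' 0 0 neg_zero |>.eventually (lt_mem_nhds (hA μ hμ))
  obtain ⟨δ, hδ, hδ0⟩ := ((hgap.filter_mono (nhdsWithin_le_nhds (s := Ioi 0))).and
    self_mem_nhdsWithin).exists
  obtain ⟨C, hC₀, hC⟩ := exists_norm_mulVec_le_of_isBigO fun w =>
    (A'.expDecaySubmodule_eq_top hδ).symm ▸ Submodule.mem_top (x := w)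
  refine ⟨δ, hδ0, C, hC₀, fun s hs v => ?_⟩
  have hcomplexify : NormedSpace.exp ((s : ℂ) • A') *ᵥ (Complex.ofReal ∘ v)
      = Complex.ofReal ∘ (NormedSpace.exp (s • A) *ᵥ v) := by
    have hsmul : (s : ℂ) • A' = (s • A).map Complex.ofReal := by ext; simp [A']
    rw [hsmul, exp_map_ofReal]
    ext i
    exact (RingHom.map_mulVec Complex.ofRealHom _ v i).symm
  have hbound := eventually_principal.1 hC s hs (Complex.ofReal ∘ v)
  rwa [hcomplexify, Complex.norm_ofReal_comp, Complex.norm_ofReal_comp,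
    Real.norm_of_nonneg (exp_nonneg _)] at hbound

end MatrixExp

theorem MeasureTheory.Measure.sigmaFinite_of_lintegral_ne_top {α : Type*} [MeasurableSpace α]
    {μ : Measure α} {f : α → ℝ≥0∞} (hf : AEMeasurable f μ) (hint : ∫⁻ x, f x ∂μ ≠ ∞)
    (hzero : μ {x | f x = 0} ≠ ∞) : SigmaFinite μ := by
  refine sigmaFinite_of_countable (S := insert {x | f x = 0}
    (range fun n : ℕ => {x | ((n : ℝ≥0∞) + 1)⁻¹ ≤ f x})) ((countable_range _).insert _) ?_ ?_
  · rintro s (rfl | ⟨n, rfl⟩)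
    · exact hzero.lt_top
    · exact (meas_ge_le_lintegral_div hf (by simp) (by simp)).trans_lt
        (ENNReal.div_lt_top hint (by simp))
  · refine eq_univ_of_forall fun x => ?_
    rcases eq_or_ne (f x) 0 with hx | hx
    · exact mem_sUnion_of_mem hx (mem_insert _ _)
    · obtain ⟨n, hn⟩ := ENNReal.exists_inv_nat_lt hx
      exact mem_sUnion_of_mem ((ENNReal.inv_le_inv.2 le_self_add).trans hn.le)
        (mem_insert_of_mem _ ⟨n, rfl⟩)

theorem lintegral_eq_of_measure_eq_of_notMem {α : Type*} [MeasurableSpace α]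
    [MeasurableSingletonClass α] {μ ρ : Measure α} {a : α}
    (h : ∀ B, MeasurableSet B → a ∉ B → μ B = ρ B) {f : α → ℝ≥0∞} (hfa : f a = 0) :
    ∫⁻ x, f x ∂μ = ∫⁻ x, f x ∂ρ := by
  have hrestrict : μ.restrict {a}ᶜ = ρ.restrict {a}ᶜ := Measure.ext fun B hB => by
    rw [Measure.restrict_apply hB, Measure.restrict_apply hB]
    exact h _ (hB.inter (measurableSet_singleton a).compl) fun ha => ha.2 rfl
  have hf : ({a}ᶜ : Set α).indicator f = f :=
    indicator_eq_self.2 fun x hx hxa => hx (mem_singleton_iff.1 hxa ▸ hfa)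
  rw [← hf, lintegral_indicator (measurableSet_singleton a).compl,
    lintegral_indicator (measurableSet_singleton a).compl, hrestrict]

theorem lintegral_eq_lintegral_lintegral_of_measure_eq {α β γ : Type*} [MeasurableSpace α]
    [MeasurableSpace β] [MeasurableSpace γ] [MeasurableSingletonClass γ] {μ : Measure α}
    [SFinite μ] {ν : Measure β} [SFinite ν] {Φ : α → β → γ}
    (hΦ : Measurable (Function.uncurry Φ)) {a : γ} {ρ : Measure γ}
    (hρ : ∀ B, MeasurableSet B → a ∉ B → ρ B = ∫⁻ s, ν {x | Φ s x ∈ B} ∂μ)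
    {f : γ → ℝ≥0∞} (hf : Measurable f) (hfa : f a = 0) :
    ∫⁻ y, f y ∂ρ = ∫⁻ s, ∫⁻ x, f (Φ s x) ∂ν ∂μ := by
  have hρmap : ∀ B, MeasurableSet B → a ∉ B → ρ B = (μ.prod ν).map (Function.uncurry Φ) B :=
    fun B hB ha => by
      rw [hρ B hB ha, Measure.map_apply hΦ hB, Measure.prod_apply (hΦ hB)]
      rfl
  rw [lintegral_eq_of_measure_eq_of_notMem hρmap hfa, lintegral_map hf hΦ]
  exact lintegral_prod (f ∘ Function.uncurry Φ) (hf.comp hΦ).aemeasurable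

theorem lintegral_Ioi_ofReal_exp_mul {a : ℝ} (ha : a < 0) (c : ℝ) :
    ∫⁻ s in Ioi c, ENNReal.ofReal (exp (a * s)) = ENNReal.ofReal (-exp (a * c) / a) := by
  rw [← ofReal_integral_eq_lintegral_ofReal (integrableOn_exp_mul_Ioi ha c)
    (ae_of_all _ fun _ => (exp_pos _).le), integral_exp_mul_Ioi ha]

theorem lintegral_Ici_ofReal_min_sq_mul_exp_le {r δ : ℝ} (hr : 0 ≤ r) (hδ : 0 < δ) :
    ∫⁻ s in Ici 0, ENNReal.ofReal (min ((r * exp (-(δ * s))) ^ 2) 1)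
      ≤ ENNReal.ofReal (min (r ^ 2) 1 / (2 * δ) + log⁺ r / δ) := by
  set s₀ := log⁺ r / δ
  have hs₀ : 0 ≤ s₀ := div_nonneg posLog_nonneg hδ.le
  have hexp_s₀ : exp (-(δ * s₀)) = (max 1 r)⁻¹ := by
    rw [mul_div_cancel₀ _ hδ.ne', exp_neg, posLog_eq_log_max_one hr,
      exp_log (lt_max_of_lt_left one_pos)]
  have hhead : ∫⁻ s in Icc 0 s₀, ENNReal.ofReal (min ((r * exp (-(δ * s))) ^ 2) 1)
      ≤ ENNReal.ofReal s₀ := by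
    calc _ ≤ ∫⁻ _ in Icc 0 s₀, 1 :=
          lintegral_mono fun s => ENNReal.ofReal_le_one.2 (min_le_right _ _)
      _ = ENNReal.ofReal s₀ := by simp
  have htail : ∫⁻ s in Ioi s₀, ENNReal.ofReal (min ((r * exp (-(δ * s))) ^ 2) 1)
      ≤ ENNReal.ofReal (min (r ^ 2) 1 / (2 * δ)) := by
    calc _ ≤ ∫⁻ s in Ioi s₀, ENNReal.ofReal (r ^ 2) * ENNReal.ofReal (exp (-(2 * δ) * s)) := by
          refine lintegral_mono fun s => ?_
          rw [← ENNReal.ofReal_mul (sq_nonneg r), mul_pow, ← exp_nat_mul]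
          exact ENNReal.ofReal_le_ofReal ((min_le_left _ _).trans_eq (by ring_nf))
      _ = ENNReal.ofReal (r ^ 2 * exp (-(δ * s₀)) ^ 2 / (2 * δ)) := by
          rw [lintegral_const_mul' _ _ ENNReal.ofReal_ne_top,
            lintegral_Ioi_ofReal_exp_mul (by linarith) s₀, ← ENNReal.ofReal_mul (sq_nonneg r),
            ← exp_nat_mul]
          ring_nf
      _ ≤ ENNReal.ofReal (min (r ^ 2) 1 / (2 * δ)) := by
          refine ENNReal.ofReal_le_ofReal (div_le_div_of_nonneg_right ?_ (by positivity))
          rw [hexp_s₀, ← mul_pow, ← div_eq_mul_inv]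
          exact le_min (pow_le_pow_left₀ (by positivity) (div_le_self hr (le_max_left _ _)) 2)
            (pow_le_one₀ (by positivity) (div_le_one_of_le₀ (le_max_right _ _) (by positivity)))
  calc _ = (∫⁻ s in Icc 0 s₀, ENNReal.ofReal (min ((r * exp (-(δ * s))) ^ 2) 1))
        + ∫⁻ s in Ioi s₀, ENNReal.ofReal (min ((r * exp (-(δ * s))) ^ 2) 1) := by
        rw [← Icc_union_Ioi_eq_Ici hs₀, lintegral_union measurableSet_Ioi
          ((Iic_disjoint_Ioi le_rfl).mono_left Icc_subset_Iic_self)]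
    _ ≤ ENNReal.ofReal s₀ + ENNReal.ofReal (min (r ^ 2) 1 / (2 * δ)) := add_le_add hhead htail
    _ = _ := by rw [← ENNReal.ofReal_add hs₀ (by positivity), add_comm]

theorem min_sq_mul_le_max_mul_min_sq (c a : ℝ) :
    min ((c * a) ^ 2) 1 ≤ max (c ^ 2) 1 * min (a ^ 2) 1 := by
  rw [mul_min_of_nonneg _ _ (by positivity), mul_one, mul_pow]
  exact min_le_min (by gcongr; exact le_max_left _ _) (le_max_right _ _)

theorem Real.posLog_mul_le_posLog_mul_min_sq_add (c a : ℝ) :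
    log⁺ (c * a) ≤ log⁺ c * min ((c * a) ^ 2) 1 + log⁺ a := by
  rcases le_or_gt |c * a| 1 with hca | hca
  · rw [(posLog_eq_zero_iff _).2 hca]
    exact add_nonneg (mul_nonneg posLog_nonneg (le_min (sq_nonneg _) zero_le_one)) posLog_nonneg
  · rw [min_eq_right (by nlinarith [sq_abs (c * a)]), mul_one]
    exact posLog_mul

theorem lintegral_ofReal_posLog_norm {E : Type*} [NormedAddCommGroup E] [MeasurableSpace E]
    [OpensMeasurableSpace E] (ν : Measure E) :
    ∫⁻ x, ENNReal.ofReal (log⁺ ‖x‖) ∂ν = ∫⁻ x in {x | 1 ≤ ‖x‖}, ENNReal.ofReal (log ‖x‖) ∂ν := by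
  rw [← lintegral_indicator (measurableSet_le measurable_const measurable_norm)]
  congr 1 with x
  by_cases hx : 1 ≤ ‖x‖
  · simp [hx, posLog_eq_log (show 1 ≤ |‖x‖| by rwa [abs_norm])]
  · simp [hx, (posLog_eq_zero_iff _).2 (show |‖x‖| ≤ 1 by rw [abs_norm]; exact (not_le.1 hx).le)]

theorem lintegral_Ici_lintegral_ofReal_min_sq_norm_lt_top {E F : Type*} [NormedAddCommGroup E]
    [MeasurableSpace E] [OpensMeasurableSpace E] [NormedAddCommGroup F] {ν : Measure E}
    [SFinite ν] (hν : ∫⁻ x, ENNReal.ofReal (min (‖x‖ ^ 2) 1) ∂ν < ⊤)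
    (hνlog : ∫⁻ x in {x | 1 ≤ ‖x‖}, ENNReal.ofReal (log ‖x‖) ∂ν < ⊤) {Φ : ℝ → E → F}
    {C δ : ℝ} (hδ : 0 < δ) (hΦ : ∀ s, 0 ≤ s → ∀ x, ‖Φ s x‖ ≤ C * ‖x‖ * exp (-(δ * s))) :
    ∫⁻ s in Ici 0, ∫⁻ x, ENNReal.ofReal (min (‖Φ s x‖ ^ 2) 1) ∂ν < ⊤ := by
  set c := |C|
  set K := (1 + 2 * log⁺ c) * max (c ^ 2) 1 / (2 * δ)
  have hK₀ : 0 ≤ (1 + 2 * log⁺ c) / (2 * δ) :=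
    div_nonneg (by linarith [posLog_nonneg (x := c)]) (by positivity)
  have hK : 0 ≤ K := by
    rw [show K = (1 + 2 * log⁺ c) / (2 * δ) * max (c ^ 2) 1 by ring]
    positivity
  have hbound (x : E) : min ((c * ‖x‖) ^ 2) 1 / (2 * δ) + log⁺ (c * ‖x‖) / δ
      ≤ K * min (‖x‖ ^ 2) 1 + log⁺ ‖x‖ / δ := by
    have h₁ := min_sq_mul_le_max_mul_min_sq c ‖x‖
    have h₂ := posLog_mul_le_posLog_mul_min_sq_add c ‖x‖
    have hm : 0 ≤ min ((c * ‖x‖) ^ 2) 1 := le_min (sq_nonneg _) zero_le_one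
    calc _ ≤ min ((c * ‖x‖) ^ 2) 1 / (2 * δ)
          + (log⁺ c * min ((c * ‖x‖) ^ 2) 1 + log⁺ ‖x‖) / δ := by gcongr
      _ = (1 + 2 * log⁺ c) / (2 * δ) * min ((c * ‖x‖) ^ 2) 1 + log⁺ ‖x‖ / δ := by
          field_simp
          ring
      _ ≤ _ := by
          rw [show K = (1 + 2 * log⁺ c) / (2 * δ) * max (c ^ 2) 1 by ring, mul_assoc]
          gcongr
  have hmeas : Measurable (Function.uncurry fun (s : ℝ) (x : E) =>
      ENNReal.ofReal (min ((c * ‖x‖ * exp (-(δ * s))) ^ 2) 1)) := by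
    fun_prop
  calc _ ≤ ∫⁻ s in Ici 0, ∫⁻ x, ENNReal.ofReal (min ((c * ‖x‖ * exp (-(δ * s))) ^ 2) 1) ∂ν := by
        refine setLIntegral_mono' measurableSet_Ici fun s hs => lintegral_mono fun x => ?_
        refine ENNReal.ofReal_le_ofReal
          (min_le_min_right _ (pow_le_pow_left₀ (norm_nonneg _) ?_ 2))
        exact (hΦ s hs x).trans (mul_le_mul_of_nonneg_right
          (mul_le_mul_of_nonneg_right (le_abs_self C) (norm_nonneg x)) (exp_pos _).le)
    _ = ∫⁻ x, (∫⁻ s in Ici 0, ENNReal.ofReal (min ((c * ‖x‖ * exp (-(δ * s))) ^ 2) 1)) ∂ν :=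
        lintegral_lintegral_swap hmeas.aemeasurable
    _ ≤ ∫⁻ x, ENNReal.ofReal K * ENNReal.ofReal (min (‖x‖ ^ 2) 1)
          + ENNReal.ofReal δ⁻¹ * ENNReal.ofReal (log⁺ ‖x‖) ∂ν := by
        refine lintegral_mono fun x => ?_
        rw [← ENNReal.ofReal_mul hK, ← ENNReal.ofReal_mul (inv_nonneg.2 hδ.le),
          ← ENNReal.ofReal_add (mul_nonneg hK (le_min (sq_nonneg _) zero_le_one))
            (mul_nonneg (inv_nonneg.2 hδ.le) posLog_nonneg)]
        exact (lintegral_Ici_ofReal_min_sq_mul_exp_le (mul_nonneg (abs_nonneg C) (norm_nonneg x))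
          hδ).trans (ENNReal.ofReal_le_ofReal ((hbound x).trans_eq (by ring)))
    _ < ⊤ := by
        rw [lintegral_add_left (by fun_prop), lintegral_const_mul' _ _ ENNReal.ofReal_ne_top,
          lintegral_const_mul' _ _ ENNReal.ofReal_ne_top, lintegral_ofReal_posLog_norm]
        exact ENNReal.add_lt_top.2 ⟨ENNReal.mul_lt_top ENNReal.ofReal_lt_top hν,
          ENNReal.mul_lt_top ENNReal.ofReal_lt_top hνlog⟩

/-- Let `ν` be a Lévy measure on `ℝ^m` (`ν {0} = 0` and
`∫ min(‖x‖², 1) ν(dx) < ∞`) with finite log-moment away from the origin, let `A` be a stable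
real `n × n` matrix (all complex eigenvalues have negative real part) and `β` an `n × m` real
matrix. Then `∫₀^∞ ∫ min(‖exp(sA) β x‖², 1) ν(dx) ds < ∞`; consequently any measure `ν_G`
with `ν_G(B) = ∫₀^∞ ν {x | exp(sA) β x ∈ B} ds` for Borel `B` avoiding `0` satisfies
`∫ min(‖y‖², 1) ν_G(dy) < ∞`. -/
theorem carma_stationary_levy_measure (n m : ℕ)
    (ν : Measure (Fin m → ℝ))
    (hν0 : ν {0} = 0)
    (hν : ∫⁻ x, ENNReal.ofReal (min (‖x‖ ^ 2) 1) ∂ν < ⊤)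
    (hνlog : ∫⁻ x in {x : Fin m → ℝ | 1 ≤ ‖x‖}, ENNReal.ofReal (Real.log ‖x‖) ∂ν < ⊤)
    (A : Matrix (Fin n) (Fin n) ℝ)
    (hA : ∀ lam ∈ spectrum ℂ (A.map Complex.ofReal), lam.re < 0)
    (β : Matrix (Fin n) (Fin m) ℝ) :
    (∫⁻ s in Set.Ici (0 : ℝ),
        ∫⁻ x, ENNReal.ofReal
          (min (‖(NormedSpace.exp (s • A) * β).mulVec x‖ ^ 2) 1) ∂ν) < ⊤ ∧
    ∀ νG : Measure (Fin n → ℝ),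
      (∀ B : Set (Fin n → ℝ), MeasurableSet B → (0 : Fin n → ℝ) ∉ B →
        νG B = ∫⁻ s in Set.Ici (0 : ℝ),
          ν {x | (NormedSpace.exp (s • A) * β).mulVec x ∈ B}) →
      ∫⁻ y, ENNReal.ofReal (min (‖y‖ ^ 2) 1) ∂νG < ⊤ := by
  have : SigmaFinite ν :=
    Measure.sigmaFinite_of_lintegral_ne_top (by fun_prop) hν.ne (by simp [hν0])
  obtain ⟨δ, hδ, C, hC₀, hdecay⟩ := A.exists_norm_exp_smul_mulVec_le hA
  set L := (mulVecLin β).toContinuousLinearMap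
  have hΦ (s : ℝ) (hs : 0 ≤ s) (x : Fin m → ℝ) :
      ‖(NormedSpace.exp (s • A) * β) *ᵥ x‖ ≤ C * ‖L‖ * ‖x‖ * exp (-(δ * s)) := by
    rw [← mulVec_mulVec]
    calc _ ≤ C * exp (-(δ * s)) * ‖L x‖ := hdecay s hs (β *ᵥ x)
      _ ≤ C * exp (-(δ * s)) * (‖L‖ * ‖x‖) := by gcongr; exact L.le_opNorm x
      _ = _ := by ring
  have hfinite := lintegral_Ici_lintegral_ofReal_min_sq_norm_lt_top hν hνlog hδ hΦ
  refine ⟨hfinite, fun νG hνG => ?_⟩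
  have hΦmeas : Measurable (Function.uncurry fun (s : ℝ) (x : Fin m → ℝ) =>
      (NormedSpace.exp (s • A) * β) *ᵥ x) := by
    have hexp : Continuous fun s : ℝ => NormedSpace.exp (s • A) := by
      open scoped Norms.Operator in
      exact NormedSpace.exp_continuous.comp (continuous_id.smul continuous_const)
    exact (((hexp.comp continuous_fst).matrix_mul continuous_const).matrix_mulVec
      continuous_snd).measurable
  rwa [lintegral_eq_lintegral_lintegral_of_measure_eq hΦmeas hνG (by fun_prop) (by simp)]
end
end

section
/- Let μ be a measure on ℝ that is finite on compact sets, let a ∈ ℝ and c ∈ ℝ, and for t ≥ 0 define Y_t := e^{at} c + ∫_{(0,t]} e^{a(t−u)} μ(du). Then for every t ≥ 0, Y_t − Y_0 − a ∫₀^t Y_s ds = μ((0,t]). -/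
open MeasureTheory Set

/-!
Write `Z t = ∫_{(0,t]} e^{a(t-u)} μ(du)`, so that `Y t = e^{at} c + Z t`. The deterministic part
integrates to `a ∫₀^t e^{as} c ds = (e^{at} - 1) c`. For the noise part, Fubini on the triangle
`0 < u ≤ s ≤ t` gives `a ∫₀^t Z s ds = ∫_{(0,t]} (a ∫_u^t e^{a(s-u)} ds) μ(du)
= ∫_{(0,t]} (e^{a(t-u)} - 1) μ(du) = Z t - μ((0,t])`.
-/

def triangle (r : ℝ) : Set (ℝ × ℝ) := {p | r < p.2 ∧ p.2 ≤ p.1}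

lemma measurableSet_triangle (r : ℝ) : MeasurableSet (triangle r) :=
  (measurableSet_lt measurable_const measurable_snd).inter
    (measurableSet_le measurable_snd measurable_fst)

section TriangleFubini

variable {μ ν : Measure ℝ} {K : ℝ → ℝ → ℝ} (r t : ℝ)

lemma integrable_indicator_triangle [IsFiniteMeasureOnCompacts μ] [IsFiniteMeasureOnCompacts ν]
    (hK : Continuous (Function.uncurry K)) :
    Integrable ((triangle r).indicator (Function.uncurry K))
      ((ν.restrict (Ioc r t)).prod (μ.restrict (Ioc r t))) := by
  refine Integrable.indicator ?_ (measurableSet_triangle r)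
  rw [Measure.prod_restrict]
  exact (hK.continuousOn.integrableOn_compact (isCompact_Icc.prod isCompact_Icc)).mono_set
    (prod_mono Ioc_subset_Icc_self Ioc_subset_Icc_self)

lemma setIntegral_Ioc_eq_setIntegral_indicator_triangle {s : ℝ} (hs : s ∈ Ioc r t) :
    ∫ u in Ioc r s, K s u ∂μ
      = ∫ u in Ioc r t, (triangle r).indicator (Function.uncurry K) (s, u) ∂μ := by
  change _ = ∫ u in Ioc r t, (Ioc r s).indicator (K s) u ∂μ
  rw [setIntegral_indicator measurableSet_Ioc, inter_eq_right.2 (Ioc_subset_Ioc_right hs.2)]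

lemma setIntegral_Icc_eq_setIntegral_indicator_triangle {u : ℝ} (hu : u ∈ Ioc r t) :
    ∫ s in Icc u t, K s u ∂ν
      = ∫ s in Ioc r t, (triangle r).indicator (Function.uncurry K) (s, u) ∂ν := by
  have hsection : (fun s ↦ (triangle r).indicator (Function.uncurry K) (s, u))
      = (Ici u).indicator (K · u) := by
    ext s
    simp only [triangle, indicator, mem_Ici, mem_ofPred_eq, hu.1, true_and,
      Function.uncurry_apply_pair]
  have hIcc : Ioc r t ∩ Ici u = Icc u t := by
    ext s
    simp only [mem_inter_iff, mem_Ioc, mem_Ici, mem_Icc]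
    constructor
    · rintro ⟨⟨-, hst⟩, hus⟩; exact ⟨hus, hst⟩
    · rintro ⟨hus, hst⟩; exact ⟨⟨hu.1.trans_le hus, hst⟩, hus⟩
  simp only [hsection, setIntegral_indicator measurableSet_Ici, hIcc]

lemma integrableOn_setIntegral_Ioc [IsFiniteMeasureOnCompacts μ] [IsFiniteMeasureOnCompacts ν]
    (hK : Continuous (Function.uncurry K)) :
    IntegrableOn (fun s ↦ ∫ u in Ioc r s, K s u ∂μ) (Ioc r t) ν :=
  (integrable_indicator_triangle r t hK).integral_prod_left.congr <|
    (ae_restrict_mem measurableSet_Ioc).mono fun _ hs ↦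
      (setIntegral_Ioc_eq_setIntegral_indicator_triangle r t hs).symm

lemma integral_Ioc_integral_Ioc_swap [IsFiniteMeasureOnCompacts μ] [IsFiniteMeasureOnCompacts ν]
    (hK : Continuous (Function.uncurry K)) :
    ∫ s in Ioc r t, (∫ u in Ioc r s, K s u ∂μ) ∂ν
      = ∫ u in Ioc r t, (∫ s in Icc u t, K s u ∂ν) ∂μ := by
  rw [setIntegral_congr_fun measurableSet_Ioc fun s hs ↦
      setIntegral_Ioc_eq_setIntegral_indicator_triangle r t hs,
    setIntegral_congr_fun measurableSet_Ioc fun u hu ↦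
      setIntegral_Icc_eq_setIntegral_indicator_triangle r t hu]
  exact integral_integral_swap (integrable_indicator_triangle r t hK)

end TriangleFubini

lemma mul_intervalIntegral_exp_mul_sub (a u t : ℝ) :
    a * ∫ s in u..t, Real.exp (a * (s - u)) = Real.exp (a * (t - u)) - 1 := by
  simp_rw [mul_sub]
  rw [intervalIntegral.mul_integral_comp_mul_sub, integral_exp, sub_self, Real.exp_zero]

lemma mul_integral_Ioc_integral_Ioc_exp (μ : Measure ℝ) [IsFiniteMeasureOnCompacts μ]
    (a r t : ℝ) :
    a * ∫ s in Ioc r t, (∫ u in Ioc r s, Real.exp (a * (s - u)) ∂μ)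
      = ∫ u in Ioc r t, Real.exp (a * (t - u)) ∂μ - μ.real (Ioc r t) := by
  have hinner : EqOn (fun u ↦ a * ∫ s in Icc u t, Real.exp (a * (s - u)))
      (fun u ↦ Real.exp (a * (t - u)) - 1) (Ioc r t) := fun u hu ↦ by
    dsimp only
    rw [integral_Icc_eq_integral_Ioc, ← intervalIntegral.integral_of_le hu.2,
      mul_intervalIntegral_exp_mul_sub]
  rw [integral_Ioc_integral_Ioc_swap r t (by fun_prop), ← integral_const_mul,
    setIntegral_congr_fun measurableSet_Ioc hinner,
    integral_sub (Continuous.integrableOn_Ioc (by fun_prop)) continuous_const.integrableOn_Ioc,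
    setIntegral_const, smul_eq_mul, mul_one]

/-- Pathwise reconstruction of the driving noise of an
Ornstein–Uhlenbeck process: if `μ` is a measure on `ℝ` that is finite on compact sets,
`a, c ∈ ℝ`, and `Y t = e^{at} c + ∫_{(0,t]} e^{a(t-u)} μ(du)` for `t ≥ 0`, then for every
`t ≥ 0` one has `Y t - Y 0 - a ∫₀^t Y s ds = μ((0, t])`. -/
theorem ou_levy_increment_reconstruction (μ : Measure ℝ) [IsFiniteMeasureOnCompacts μ]
    (a c : ℝ) (Y : ℝ → ℝ)
    (hY : ∀ t : ℝ, 0 ≤ t →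
      Y t = Real.exp (a * t) * c + ∫ u in Set.Ioc 0 t, Real.exp (a * (t - u)) ∂μ) :
    ∀ t : ℝ, 0 ≤ t →
      Y t - Y 0 - a * ∫ s in (0 : ℝ)..t, Y s = (μ (Set.Ioc 0 t)).toReal := by
  intro t ht
  have hY₀ : Y 0 = c := by simp [hY 0 le_rfl]
  have hdrift : a * ∫ s in Ioc 0 t, Real.exp (a * s) * c = (Real.exp (a * t) - 1) * c := by
    rw [integral_mul_const, ← intervalIntegral.integral_of_le ht, ← mul_assoc]
    simpa only [sub_zero] using congrArg (· * c) (mul_intervalIntegral_exp_mul_sub a 0 t)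
  have hintegral : a * ∫ s in (0 : ℝ)..t, Y s = (Real.exp (a * t) - 1) * c
      + (∫ u in Ioc 0 t, Real.exp (a * (t - u)) ∂μ - μ.real (Ioc 0 t)) := by
    rw [intervalIntegral.integral_of_le ht,
      setIntegral_congr_fun measurableSet_Ioc fun s hs ↦ hY s hs.1.le,
      integral_add (Continuous.integrableOn_Ioc (by fun_prop))
        (integrableOn_setIntegral_Ioc 0 t (by fun_prop)),
      mul_add, hdrift, mul_integral_Ioc_integral_Ioc_exp]
  rw [hY t ht, hY₀, hintegral, measureReal_def]
  ring
end
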